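/- For every positive integer n, S_q(q^{-n}) = n (and S_q(1) = 0), where 0 < q < 1. -/

import Mathlib

/-! The partial sums `T_N(x) = ∑_{k=1}^{N} q^k/(1-q^k) (x;q)_k` satisfy the exact identity
`T_N(x) - T_N(qx) = (qx;q)_N - 1`, because `(x;q)_k - (qx;q)_k = -x (1-q^k) (qx;q)_{k-1}` and
the resulting sum `-∑ x q^k (qx;q)_{k-1}` telescopes. At `x = q^{-n}` the product `(x;q)_k`
vanishes for `k > n`, so `S_q` is such a partial sum; starting from `T_N(1) = 0` each step
`q^{-n} ↦ q^{-(n+1)}` lowers it by one. -/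

noncomputable def qPoch (q x : ℂ) (k : ℕ) : ℂ := ∏ j ∈ Finset.range k, (1 - x * q ^ j)

noncomputable def Sq (q : ℝ) (x : ℂ) : ℂ :=
  -∑' k : ℕ, ((q : ℂ) ^ (k + 1) / (1 - (q : ℂ) ^ (k + 1))) * qPoch q x (k + 1)

open Finset

noncomputable def qLogTerm (q x : ℂ) (k : ℕ) : ℂ :=
  q ^ (k + 1) / (1 - q ^ (k + 1)) * qPoch q x (k + 1)

section qPoch

variable (q x : ℂ)

@[simp]
lemma qPoch_zero : qPoch q x 0 = 1 := prod_range_zero _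

lemma qPoch_succ (k : ℕ) : qPoch q x (k + 1) = qPoch q x k * (1 - x * q ^ k) :=
  prod_range_succ _ k

lemma qPoch_succ' (k : ℕ) : qPoch q x (k + 1) = (1 - x) * qPoch q (q * x) k := by
  simp only [qPoch, prod_range_succ', pow_zero, mul_one, pow_succ]
  rw [mul_comm]
  congr 1
  exact prod_congr rfl fun j _ => by ring

lemma qPoch_one_succ (k : ℕ) : qPoch q 1 (k + 1) = 0 := by
  simp [qPoch_succ']

lemma qPoch_inv_pow_eq_zero (hq : q ≠ 0) {n m : ℕ} (h : n < m) : qPoch q (q ^ n)⁻¹ m = 0 :=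
  prod_eq_zero (mem_range.2 h) (by field_simp; ring)

end qPoch

section qLogTerm

variable {q : ℂ} (x : ℂ)

lemma qLogTerm_sub_qLogTerm_mul (hq : ∀ k : ℕ, q ^ (k + 1) ≠ 1) (k : ℕ) :
    qLogTerm q x k - qLogTerm q (q * x) k = qPoch q (q * x) (k + 1) - qPoch q (q * x) k := by
  have hk : 1 - q ^ (k + 1) ≠ 0 := sub_ne_zero.2 (hq k).symm
  rw [qLogTerm, qLogTerm, qPoch_succ' q x, qPoch_succ q (q * x)]
  field_simp
  ring

lemma sum_qLogTerm_sub_sum_qLogTerm_mul (hq : ∀ k : ℕ, q ^ (k + 1) ≠ 1) (N : ℕ) :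
    ∑ k ∈ range N, qLogTerm q x k - ∑ k ∈ range N, qLogTerm q (q * x) k
      = qPoch q (q * x) N - 1 := by
  rw [← sum_sub_distrib, sum_congr rfl fun k _ => qLogTerm_sub_qLogTerm_mul x hq k,
    sum_range_sub, qPoch_zero]

lemma sum_qLogTerm_inv_pow (hq0 : q ≠ 0) (hq : ∀ k : ℕ, q ^ (k + 1) ≠ 1) {n N : ℕ}
    (hn : n < N) : ∑ k ∈ range N, qLogTerm q (q ^ n)⁻¹ k = -n := by
  induction n with
  | zero => simp [qLogTerm, qPoch_one_succ]
  | succ n ih =>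
    have hshift : q * (q ^ (n + 1))⁻¹ = (q ^ n)⁻¹ := by field_simp; ring
    have hdiff := sum_qLogTerm_sub_sum_qLogTerm_mul (q ^ (n + 1))⁻¹ hq N
    rw [hshift, ih (by omega), qPoch_inv_pow_eq_zero q hq0 (by omega : n < N)] at hdiff
    push_cast
    linear_combination hdiff

end qLogTerm

lemma Sq_eq_neg_sum_qLogTerm {q : ℝ} {x : ℂ} {N : ℕ}
    (hx : ∀ k, N ≤ k → qPoch q x (k + 1) = 0) :
    Sq q x = -∑ k ∈ range N, qLogTerm q x k := by
  rw [Sq, tsum_eq_sum (s := range N) fun k hk => by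
    rw [hx k (by simpa using hk), mul_zero]]
  rfl

theorem qlog_value_at_negative_powers (q : ℝ) (hq0 : 0 < q) (hq1 : q < 1) :
    Sq q 1 = 0 ∧ ∀ n : ℕ, 1 ≤ n → Sq q ((q : ℂ) ^ (-(n : ℤ))) = n := by
  have hQ0 : (q : ℂ) ≠ 0 := Complex.ofReal_ne_zero.2 hq0.ne'
  have hQ1 (k : ℕ) : (q : ℂ) ^ (k + 1) ≠ 1 := by
    exact_mod_cast (pow_lt_one₀ hq0.le hq1 k.succ_ne_zero).ne
  have key (n : ℕ) : Sq q ((q : ℂ) ^ (-(n : ℤ))) = n := by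
    rw [zpow_neg, zpow_natCast, Sq_eq_neg_sum_qLogTerm (N := n + 1)
      fun k hk => qPoch_inv_pow_eq_zero _ hQ0 (by omega),
      sum_qLogTerm_inv_pow hQ0 hQ1 n.lt_succ_self, neg_neg]
  exact ⟨by simpa using key 0, fun n _ => key n⟩
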